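/- arXiv:1709.04331 — 6 statements merged into one kernel-verified Lean document; each statement's English description precedes it below -/
import Mathlib

section
/- Let K be a field of characteristic zero containing a primitive 2^n-th root of unity ζ, with a valuation ring O ⊆ K whose maximal ideal contains 2. If l_0, …, l_{2^m−1} are integers such that the sum ∑_{i=0}^{2^m−1} ζ^{l_i} lies in 2^m·O, then either all the ζ^{l_i} are equal, or the sum ∑_{i=0}^{2^m−1} ζ^{l_i} equals 0. -/
/-!
Write `N = 2 ^ (n - 1)`, so that `ζ ^ N = -1`. Folding the exponents modulo `X ^ N + 1`, the sum
becomes `P(ζ)` for an integer polynomial `P` of degree `< N` whose coefficients are signed counts of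
the `2 ^ m` exponents. For `π = ζ - 1` the element `π ^ N` is associated to `2` in `O`, so the
terms `c π ^ k`, `k < N`, of `P(ζ)` cannot cancel modulo `2`: `P(ζ) ∈ 2O` forces every coefficient
of `P` to be even, and dividing by `2` repeatedly, `P(ζ) ∈ 2 ^ m O` makes them divisible by `2 ^ m`.
A nonzero signed count of `2 ^ m` signs divisible by `2 ^ m` is `±2 ^ m`, which means that all the
`ζ ^ l i` are equal.
-/

open Polynomial Finset

theorem IsPrimitiveRoot.associated_sub_one_pow_totient {A : Type*} [CommRing A] [IsDomain A]
    {p k : ℕ} [Fact p.Prime] {ζ : A} (hζ : IsPrimitiveRoot ζ (p ^ (k + 1))) :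
    Associated ((ζ - 1) ^ (p ^ (k + 1)).totient) (p : A) := by
  rw [← eval_one_cyclotomic_prime_pow (R := A) k, cyclotomic_eq_prod_X_sub_primitiveRoots hζ,
    eval_prod, ← hζ.card_primitiveRoots, ← prod_const]
  refine Associated.prod _ _ _ fun η hη ↦ ?_
  obtain ⟨i, -, hi, rfl⟩ := hζ.isPrimitiveRoot_iff.mp (isPrimitiveRoot_of_mem_primitiveRoots hη)
  simpa using (hζ.associated_sub_one_pow_sub_one_of_coprime hi).neg_right

theorem IsLocalRing.isUnit_intCast_of_odd {R : Type*} [CommRing R] [IsLocalRing R]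
    (h2 : ¬IsUnit (2 : R)) {a : ℤ} (ha : Odd a) : IsUnit (a : R) := by
  obtain ⟨b, rfl⟩ := ha
  have h : IsUnit (((2 * b + 1 : ℤ) : R) + -(2 * b)) := by push_cast; simp
  refine (isUnit_or_isUnit_of_isUnit_add h).resolve_right fun hb ↦ h2 ?_
  exact isUnit_of_mul_isUnit_left (IsUnit.neg_iff _ |>.mp hb)

theorem C_two_dvd_of_pow_dvd_aeval {R : Type*} [CommRing R] [IsDomain R] [IsLocalRing R]
    {π : R} {N : ℕ} (hπ0 : π ≠ 0) (hπ : ¬IsUnit π) (h2 : π ^ N ∣ 2) {Q : ℤ[X]}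
    (hQ : Q.natDegree < N) (hQπ : π ^ N ∣ aeval π Q) : C 2 ∣ Q := by
  -- At the first odd coefficient `Q.coeff k`, `π ^ (k + 1)` divides all other terms of `Q(π)`,
  -- so `π` divides the unit `Q.coeff k`.
  refine (C_dvd_iff_dvd_coeff _ _).mpr fun k ↦ ?_
  induction k using Nat.strong_induction_on with
  | _ k ih =>
  rcases le_or_gt N k with hNk | hkN
  · rw [coeff_eq_zero_of_natDegree_lt (hQ.trans_le hNk)]
    exact dvd_zero 2
  have hpow : π ^ (k + 1) ∣ π ^ N := pow_dvd_pow π hkN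
  have hterm : ∀ i ∈ (range N).erase k, π ^ (k + 1) ∣ (Q.coeff i : R) * π ^ i := by
    intro i hi
    rcases lt_or_gt_of_ne (ne_of_mem_erase hi) with hik | hki
    · obtain ⟨c, hc⟩ := ih i hik
      rw [hc, Int.cast_mul, Int.cast_two, mul_assoc]
      exact (hpow.trans h2).mul_right _
    · exact (pow_dvd_pow π hki).mul_left _
  have hk : π ^ (k + 1) ∣ (Q.coeff k : R) * π ^ k := by
    rw [aeval_eq_sum_range' hQ, ← add_sum_erase _ _ (mem_range.mpr hkN)] at hQπ
    simp only [zsmul_eq_mul] at hQπ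
    exact (dvd_add_left (dvd_sum hterm)).mp (hpow.trans hQπ)
  rw [pow_succ', mul_dvd_mul_iff_right (pow_ne_zero k hπ0)] at hk
  have h2' : ¬IsUnit (2 : R) := fun hu ↦
    hπ ((isUnit_pow_iff (by omega)).mp (isUnit_of_dvd_unit h2 hu))
  by_contra hodd
  rw [← even_iff_two_dvd, Int.not_even_iff_odd] at hodd
  exact hπ (isUnit_of_dvd_unit hk (IsLocalRing.isUnit_intCast_of_odd h2' hodd))

namespace IsPrimitiveRoot

theorem exists_pow_eq_zpow {K : Type*} [Field K] {ζ : K} {n : ℕ} [NeZero n]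
    (hζ : IsPrimitiveRoot ζ n) (l : ℤ) : ∃ a : ℕ, ζ ^ a = ζ ^ l := by
  obtain ⟨a, -, ha⟩ := hζ.eq_pow_of_pow_eq_one (ξ := ζ ^ l) (by
    rw [← zpow_natCast, ← zpow_mul, mul_comm, zpow_mul, zpow_natCast, hζ.pow_eq_one, one_zpow])
  exact ⟨a, ha⟩

variable {R : Type*} [CommRing R] {ζ : R} {k : ℕ}

theorem sub_one_ne_zero_of_two_pow (hζ : IsPrimitiveRoot ζ (2 ^ (k + 1))) : ζ - 1 ≠ 0 :=
  hζ.sub_one_ne_zero (Nat.one_lt_two_pow k.succ_ne_zero)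

variable [IsDomain R]

theorem pow_two_pow_eq_neg_one (hζ : IsPrimitiveRoot ζ (2 ^ (k + 1))) : ζ ^ 2 ^ k = -1 := by
  have h := hζ.pow_of_dvd (by positivity) (pow_dvd_pow 2 k.le_succ)
  rw [pow_succ', Nat.mul_div_cancel _ (by positivity)] at h
  exact h.eq_neg_one_of_two_right

theorem associated_sub_one_pow_two (hζ : IsPrimitiveRoot ζ (2 ^ (k + 1))) :
    Associated ((ζ - 1) ^ 2 ^ k) 2 := by
  simpa [Nat.totient_prime_pow_succ Nat.prime_two] using hζ.associated_sub_one_pow_totient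

variable [IsLocalRing R]

theorem C_two_dvd_of_two_dvd_aeval (hζ : IsPrimitiveRoot ζ (2 ^ (k + 1)))
    (h2 : ¬IsUnit (2 : R)) {P : ℤ[X]} (hP : P.natDegree < 2 ^ k) (hPζ : 2 ∣ aeval ζ P) :
    C 2 ∣ P := by
  have hassoc := hζ.associated_sub_one_pow_two
  have hπ : ¬IsUnit (ζ - 1) := fun hu ↦ h2 (hassoc.isUnit_iff.mp (hu.pow _))
  have hshift : C 2 ∣ P.comp (X + 1) := by
    refine C_two_dvd_of_pow_dvd_aeval hζ.sub_one_ne_zero_of_two_pow hπ hassoc.dvd ?_ ?_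
    · rwa [natDegree_comp, ← C_1, natDegree_X_add_C, mul_one]
    · simpa [aeval_comp] using hassoc.dvd.trans hPζ
  have hunshift := map_dvd (compRingHom (X - 1)) hshift
  simp only [coe_compRingHom_apply, C_comp, comp_assoc, add_comp, X_comp, one_comp,
    sub_add_cancel, comp_X] at hunshift
  exact hunshift

theorem C_two_pow_dvd_of_two_pow_dvd_aeval (hζ : IsPrimitiveRoot ζ (2 ^ (k + 1)))
    (h2 : ¬IsUnit (2 : R)) (m : ℕ) {P : ℤ[X]} (hP : P.natDegree < 2 ^ k)
    (hPζ : (2 : R) ^ m ∣ aeval ζ P) : C (2 ^ m) ∣ P := by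
  induction m generalizing P with
  | zero => simp
  | succ m ih =>
    obtain ⟨P, rfl⟩ :=
      hζ.C_two_dvd_of_two_dvd_aeval h2 hP ((dvd_pow_self 2 m.succ_ne_zero).trans hPζ)
    have h20 : (2 : R) ≠ 0 :=
      hζ.associated_sub_one_pow_two.ne_zero_iff.mp (pow_ne_zero _ hζ.sub_one_ne_zero_of_two_pow)
    rw [pow_succ', map_mul, aeval_C, algebraMap_int_eq, eq_intCast, Int.cast_two,
      mul_dvd_mul_iff_left h20] at hPζ
    rw [pow_succ', C_mul]
    exact mul_dvd_mul_left _ (ih (by rwa [natDegree_C_mul two_ne_zero] at hP) hPζ)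

end IsPrimitiveRoot

theorem ValuationSubring.C_two_pow_dvd_of_aeval_eq {K : Type*} [Field K] (O : ValuationSubring K)
    (h2 : ¬IsUnit (2 : O)) {ζ : K} {k : ℕ} (hζ : IsPrimitiveRoot ζ (2 ^ (k + 1))) (m : ℕ)
    {P : ℤ[X]} (hP : P.natDegree < 2 ^ k) {y : K} (hy : y ∈ O) (hPζ : aeval ζ P = 2 ^ m * y) :
    C (2 ^ m) ∣ P := by
  obtain ⟨ζO, rfl⟩ := IsIntegrallyClosed.isIntegral_iff.mp
    ((hζ.isIntegral (by positivity)).tower_top (A := O))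
  refine (hζ.of_map_of_injective (IsFractionRing.injective O K)).C_two_pow_dvd_of_two_pow_dvd_aeval
    h2 m hP ⟨⟨y, hy⟩, IsFractionRing.injective O K ?_⟩
  rw [← aeval_algebraMap_apply, hPζ, map_mul, map_pow, map_ofNat]
  rfl

theorem Fintype.forall_eq_one_or_forall_eq_neg_one_of_card_le_abs_sum {ι : Type*} [Fintype ι]
    {f : ι → ℤ} (hf : ∀ i, |f i| ≤ 1) (h : (Fintype.card ι : ℤ) ≤ |∑ i, f i|) :
    (∀ i, f i = 1) ∨ ∀ i, f i = -1 := by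
  have all_one : ∀ g : ι → ℤ, (∀ i, g i ≤ 1) → (Fintype.card ι : ℤ) ≤ ∑ i, g i →
      ∀ i, g i = 1 := by
    intro g hg hcard i
    have hsum : ∑ i, g i = ∑ _i : ι, (1 : ℤ) :=
      le_antisymm (sum_le_sum fun i _ ↦ hg i) (by simpa using hcard)
    exact (sum_eq_sum_iff_of_le fun i _ ↦ hg i).mp hsum i (mem_univ i)
  rcases abs_cases (∑ i, f i) with ⟨habs, -⟩ | ⟨habs, -⟩
  · exact .inl (all_one f (fun i ↦ (abs_le.mp (hf i)).2) (habs ▸ h))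
  · refine .inr fun i ↦ neg_eq_iff_eq_neg.mp (all_one (-f) (fun i ↦ ?_) ?_ i)
    · exact neg_le.mpr (abs_le.mp (hf i)).1
    · simpa [habs] using h

theorem pow_eq_neg_one_pow_mul_pow_mod {M : Type*} [Monoid M] [HasDistribNeg M] {ζ : M} {N : ℕ}
    (hζ : ζ ^ N = -1) (a : ℕ) : ζ ^ a = (-1) ^ (a / N) * ζ ^ (a % N) := by
  rw [← hζ, ← pow_mul, ← pow_add, Nat.div_add_mod]

section Negacyclic

variable {ι : Type*} [Fintype ι] (N : ℕ) (a : ι → ℕ)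

/-- The representative of degree `< N` of `∑ i, X ^ a i` in `ℤ[X] ⧸ (X ^ N + 1)`. -/
noncomputable def negacyclicSum : ℤ[X] :=
  ∑ i, monomial (a i % N) ((-1) ^ (a i / N))

theorem natDegree_negacyclicSum_lt (hN : 0 < N) : (negacyclicSum N a).natDegree < N := by
  have : (negacyclicSum N a).natDegree ≤ N - 1 :=
    natDegree_sum_le_of_forall_le _ _ fun i _ ↦
      (natDegree_monomial_le _).trans (Nat.le_sub_one_of_lt (Nat.mod_lt _ hN))
  omega

theorem coeff_negacyclicSum (k : ℕ) :
    (negacyclicSum N a).coeff k = ∑ i, if a i % N = k then (-1) ^ (a i / N) else 0 := by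
  simp [negacyclicSum, coeff_monomial]

theorem aeval_negacyclicSum {R : Type*} [CommRing R] {ζ : R} (hζ : ζ ^ N = -1) :
    aeval ζ (negacyclicSum N a) = ∑ i, ζ ^ a i := by
  refine (map_sum _ _ _).trans (sum_congr rfl fun i _ ↦ ?_)
  rw [aeval_monomial, map_pow, map_neg, map_one, ← pow_eq_neg_one_pow_mul_pow_mod hζ]

theorem exists_forall_eq_of_card_dvd_coeff_negacyclicSum
    (hdvd : ∀ k, (Fintype.card ι : ℤ) ∣ (negacyclicSum N a).coeff k)
    (hne : negacyclicSum N a ≠ 0) :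
    ∃ r e, ∀ i, a i % N = r ∧ (-1) ^ (a i / N) = e := by
  set r := (negacyclicSum N a).natDegree
  have hr : (negacyclicSum N a).coeff r ≠ 0 := leadingCoeff_ne_zero.mpr hne
  have hcard : (Fintype.card ι : ℤ) ≤ |(negacyclicSum N a).coeff r| :=
    Int.le_of_dvd (abs_pos.mpr hr) ((dvd_abs _ _).mpr (hdvd r))
  rw [coeff_negacyclicSum] at hcard
  have hsign := Fintype.forall_eq_one_or_forall_eq_neg_one_of_card_le_abs_sum
    (fun i ↦ by split_ifs <;> simp) hcard
  obtain ⟨e, he0, he⟩ : ∃ e : ℤ, e ≠ 0 ∧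
      ∀ i, (if a i % N = r then (-1) ^ (a i / N) else 0) = e :=
    hsign.elim (fun h ↦ ⟨1, one_ne_zero, h⟩) (fun h ↦ ⟨-1, by norm_num, h⟩)
  refine ⟨r, e, fun i ↦ ?_⟩
  have hi := he i
  split_ifs at hi with hri
  exacts [⟨hri, hi⟩, absurd hi.symm he0]

end Negacyclic

theorem stmt_0_general {K : Type*} [Field K] (n m : ℕ)
    (ζ : K) (hζ : IsPrimitiveRoot ζ (2 ^ n))
    (O : ValuationSubring K) (h2 : ¬ IsUnit (2 : O))
    (l : Fin (2 ^ m) → ℤ)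
    (hsum : ∃ y : K, y ∈ O ∧ (∑ i, ζ ^ (l i)) = (2 : K) ^ m * y) :
    (∀ i j, ζ ^ (l i) = ζ ^ (l j)) ∨ (∑ i, ζ ^ (l i)) = 0 := by
  obtain _ | k := n
  · exact .inl fun i j ↦ by simp [IsPrimitiveRoot.one_right_iff.mp hζ]
  obtain ⟨y, hy, hsum⟩ := hsum
  choose a ha using fun i ↦ hζ.exists_pow_eq_zpow (l i)
  have hneg := hζ.pow_two_pow_eq_neg_one
  set P := negacyclicSum (2 ^ k) a
  have hP : aeval ζ P = ∑ i, ζ ^ l i := by simp [P, aeval_negacyclicSum _ _ hneg, ha]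
  rcases eq_or_ne P 0 with hP0 | hP0
  · exact .inr (by rw [← hP, hP0, map_zero])
  have hcoeff := O.C_two_pow_dvd_of_aeval_eq h2 hζ m
    (natDegree_negacyclicSum_lt _ a (by positivity)) hy (hP.trans hsum)
  obtain ⟨r, e, hre⟩ := exists_forall_eq_of_card_dvd_coeff_negacyclicSum _ a
    (by simpa using (C_dvd_iff_dvd_coeff _ _).mp hcoeff) hP0
  have hconst : ∀ i, ζ ^ l i = e * ζ ^ r := fun i ↦ by
    rw [← ha i, pow_eq_neg_one_pow_mul_pow_mod hneg, (hre i).1, ← (hre i).2, Int.cast_pow,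
      Int.cast_neg, Int.cast_one]
  exact .inl fun i j ↦ by rw [hconst i, hconst j]

/-- If `ζ` is a primitive `2^n`-th root of unity in a characteristic-zero field `K`
with a valuation ring `O ⊆ K` whose maximal ideal contains `2`, and a sum of `2^m` powers of `ζ`
lies in `2^m·O`, then either all those powers of `ζ` are equal or the sum is zero. -/
theorem stmt_0 {K : Type*} [Field K] [CharZero K] (n m : ℕ) (hn : 0 < n) (hm : 0 < m)
    (ζ : K) (hζ : IsPrimitiveRoot ζ (2 ^ n))
    (O : ValuationSubring K) (h2 : ¬ IsUnit (2 : O))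
    (l : Fin (2 ^ m) → ℤ)
    (hsum : ∃ y : K, y ∈ O ∧ (∑ i, ζ ^ (l i)) = (2 : K) ^ m * y) :
    (∀ i j, ζ ^ (l i) = ζ ^ (l j)) ∨ (∑ i, ζ ^ (l i)) = 0 :=
  stmt_0_general n m ζ hζ O h2 l hsum
end

section
/- The automorphism group of the abelian group C_{2^n} × C_2 × C_2, for n > 1, has a Sylow 3-subgroup of order 3; more precisely, the largest odd-order subgroup of Aut(C_{2^n} × C_2 × C_2) has order 3. Consequently every subgroup of odd order of Aut(C_{2^n} × C_2 × C_2) is trivial or isomorphic to C_3. -/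
/-!
Let `A = ℤ/2ⁿ × V` with `V = C₂ × C₂` and `n ≥ 2`. The subgroups `K = {x | 2ⁿ⁻¹ • x = 0}`, which is
`2ℤ/2ⁿ × V`, and `2A = 2ℤ/2ⁿ × 0` are characteristic, so `Aut A` acts on `K / 2A ≅ V`, giving a
homomorphism `Aut A → Perm V` into a group of order 24. An automorphism `f` in its kernel preserves
the parity of the first coordinate and fixes `V` modulo `2A`, which forces `f² x ≡ x` modulo `2A`.
If `g x ≡ x` modulo `2ʲA` with `j ≥ 1`, then `g² x ≡ x` modulo `2ʲ⁺¹A`, so `f^(2ⁿ) = 1`. Hence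
the kernel is a 2-group, an odd-order subgroup embeds in `Perm V` and has order 1 or 3, and
`id × (v ↦ (v₂, v₁ + v₂))` shows that order 3 occurs.
-/

namespace ZMod

theorem even_or_odd {m : ℕ} [NeZero m] (a : ZMod m) : Even a ∨ Odd a := by
  rw [← natCast_zmod_val a]
  exact (Nat.even_or_odd a.val).imp Even.natCast Odd.natCast

theorem two_pow_pred_mul_eq_zero_iff {n : ℕ} (hn : n ≠ 0) (a : ZMod (2 ^ n)) :
    2 ^ (n - 1) * a = 0 ↔ Even a := by
  have h2n : 2 ^ n = 2 ^ (n - 1) * 2 := by rw [← pow_succ, Nat.sub_add_cancel (by omega)]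
  constructor
  · intro h
    have hval : ((2 ^ (n - 1) * a.val : ℕ) : ZMod (2 ^ n)) = 0 := by
      push_cast
      rwa [natCast_zmod_val]
    rw [natCast_eq_zero_iff] at hval
    replace hval : 2 ∣ a.val :=
      (Nat.mul_dvd_mul_iff_left (by positivity)).mp ((dvd_of_eq h2n.symm).trans hval)
    rw [← natCast_zmod_val a]
    exact (even_iff_two_dvd.mpr hval).natCast
  · rintro ⟨r, rfl⟩
    have h : ((2 ^ n : ℕ) : ZMod (2 ^ n)) = 0 := natCast_self _
    push_cast at h
    rw [← two_mul, ← mul_assoc, ← pow_succ, Nat.sub_add_cancel (by omega), h, zero_mul]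

end ZMod

theorem two_pow_nsmul_eq_zero {V : Type*} [AddMonoid V] (hV : ∀ v : V, 2 • v = 0) {k : ℕ}
    (hk : k ≠ 0) (v : V) : 2 ^ k • v = 0 := by
  rw [← Nat.sub_add_cancel (Nat.one_le_iff_ne_zero.mpr hk), pow_succ, mul_nsmul', hV, nsmul_zero]

theorem Subgroup.card_dvd_card_of_coprime {G K : Type*} [Group G] [Group K] (φ : G →* K) {m : ℕ}
    (hφ : ∀ g, φ g = 1 → g ^ m = 1) (H : Subgroup G) (hH : (Nat.card H).Coprime m) :
    Nat.card H ∣ Nat.card K := by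
  refine card_dvd_of_injective (φ.comp H.subtype) ((injective_iff_map_eq_one _).mpr fun h hh ↦ ?_)
  have hm : h ^ m = 1 := Subtype.ext (by simpa using hφ h hh)
  simpa [hH] using pow_gcd_eq_one.mpr ⟨pow_card_eq_one', hm⟩

theorem Prod.two_pow_pred_nsmul_eq_zero_iff {n : ℕ} {V : Type*} [AddCommGroup V] (hn : 1 < n)
    (hV : ∀ v : V, 2 • v = 0) (x : ZMod (2 ^ n) × V) : 2 ^ (n - 1) • x = 0 ↔ Even x.1 := by
  rw [← ZMod.two_pow_pred_mul_eq_zero_iff (by omega), Prod.ext_iff]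
  simp [two_pow_nsmul_eq_zero hV (show n - 1 ≠ 0 by omega), nsmul_eq_mul]

namespace AddAut

section Congruence

variable {A : Type*} [AddCommMonoid A]

theorem exists_two_nsmul_apply_eq_add (f : AddAut A) {j : ℕ}
    (hf : ∀ x, ∃ y, f x = x + 2 ^ (j + 1) • y) (x : A) :
    ∃ y, (2 • f) x = x + 2 ^ (j + 2) • y := by
  obtain ⟨y, hy⟩ := hf x
  obtain ⟨z, hz⟩ := hf y
  refine ⟨y + 2 ^ j • z, ?_⟩
  rw [two_nsmul, add_apply, hy, map_add, map_nsmul, hy, hz]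
  simp only [smul_add, smul_smul, add_assoc, ← add_assoc (_ • y), ← add_nsmul]
  ring_nf

theorem exists_two_pow_nsmul_apply_eq_add (f : AddAut A) {j : ℕ}
    (hf : ∀ x, ∃ y, f x = x + 2 ^ (j + 1) • y) (k : ℕ) (x : A) :
    ∃ y, (2 ^ k • f) x = x + 2 ^ (j + k + 1) • y := by
  induction k generalizing x with
  | zero => simpa using hf x
  | succ k ih =>
    rw [pow_succ', mul_nsmul']
    exact exists_two_nsmul_apply_eq_add _ ih x

end Congruence

variable {V : Type*} [AddCommGroup V]

theorem snd_apply_eq_of_even_fst {M : Type*} [AddCommGroup M] (hV : ∀ v : V, 2 • v = 0)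
    (f : AddAut (M × V)) {x : M × V} (hx : Even x.1) : (f x).2 = (f (0, x.2)).2 := by
  obtain ⟨r, hr⟩ := hx
  have hsplit : x = 2 • (r, 0) + (0, x.2) := by ext <;> simp [hr, two_nsmul]
  rw [hsplit, map_add, map_nsmul]
  simp [hV]

variable {n : ℕ}

theorem even_fst_apply_iff (hn : 1 < n) (hV : ∀ v : V, 2 • v = 0)
    (f : AddAut (ZMod (2 ^ n) × V)) (x : ZMod (2 ^ n) × V) : Even (f x).1 ↔ Even x.1 := by
  rw [← Prod.two_pow_pred_nsmul_eq_zero_iff hn hV, ← Prod.two_pow_pred_nsmul_eq_zero_iff hn hV,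
    ← map_nsmul, AddEquiv.map_eq_zero_iff]

/-- The action on `{x | 2ⁿ⁻¹ • x = 0} / 2A ≅ V`, read off on the representatives `(0, v)`. -/
def sndPerm (hn : 1 < n) (hV : ∀ v : V, 2 • v = 0) :
    Multiplicative (AddAut (ZMod (2 ^ n) × V)) →* Equiv.Perm V :=
  Equiv.Perm.equivUnitsEnd.symm.toMonoidHom.comp <| MonoidHom.toHomUnits
    { toFun := fun f v ↦ (f.toAdd (0, v)).2
      map_one' := rfl
      map_mul' := fun f _ ↦ funext fun _ ↦
        snd_apply_eq_of_even_fst hV f.toAdd ((even_fst_apply_iff hn hV _ _).mpr .zero) }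

theorem sndPerm_apply (hn : 1 < n) (hV : ∀ v : V, 2 • v = 0)
    (f : Multiplicative (AddAut (ZMod (2 ^ n) × V))) (v : V) :
    sndPerm hn hV f v = (f.toAdd (0, v)).2 := rfl

theorem exists_two_nsmul_apply_eq_add_two_nsmul (hn : 1 < n) (hV : ∀ v : V, 2 • v = 0)
    (f : AddAut (ZMod (2 ^ n) × V)) (hf : ∀ v, (f (0, v)).2 = v) (x : ZMod (2 ^ n) × V) :
    ∃ y, (2 • f) x = x + 2 • y := by
  have hf₀ (v : V) : ∃ c, f (0, v) = (0, v) + 2 • (c, 0) := by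
    obtain ⟨c, hc⟩ := (even_fst_apply_iff hn hV f (0, v)).mpr .zero
    exact ⟨c, by ext <;> simp [hc, hf, two_mul]⟩
  have hfx : ∃ c v, f x = x + 2 • (c, 0) + (0, v) := by
    have hpar := even_fst_apply_iff hn hV f x
    obtain ⟨c, hc⟩ : Even ((f x).1 - x.1) := by
      by_cases hx : Even x.1
      · exact (hpar.mpr hx).sub hx
      · exact ((ZMod.even_or_odd _).resolve_left (hpar.not.mpr hx)).sub_odd
          ((ZMod.even_or_odd _).resolve_left hx)
    exact ⟨c, (f x).2 - x.2, by ext <;> simp [two_mul, ← hc]⟩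
  obtain ⟨c, v, hc⟩ := hfx
  obtain ⟨c', hc'⟩ := hf₀ v
  have hv : 2 • ((0 : ZMod (2 ^ n)), v) = 0 := by ext <;> simp [hV]
  refine ⟨(c, 0) + f (c, 0) + (c', 0), ?_⟩
  rw [two_nsmul f, add_apply, hc, map_add, map_add, map_nsmul, hc', hc]
  calc _ = x + 2 • ((c, 0) + f (c, 0) + (c', 0)) + 2 • ((0 : ZMod (2 ^ n)), v) := by abel
    _ = _ := by rw [hv, add_zero]

theorem pow_two_pow_eq_one_of_sndPerm_eq_one (hn : 1 < n) (hV : ∀ v : V, 2 • v = 0)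
    (g : Multiplicative (AddAut (ZMod (2 ^ n) × V))) (hg : sndPerm hn hV g = 1) :
    g ^ 2 ^ n = 1 := by
  have hf (v : V) : (g.toAdd (0, v)).2 = v := by rw [← sndPerm_apply hn hV, hg]; rfl
  apply Multiplicative.toAdd.injective
  refine AddEquiv.ext fun x ↦ ?_
  obtain ⟨y, hy⟩ := exists_two_pow_nsmul_apply_eq_add (j := 0) _
    (by simpa using exists_two_nsmul_apply_eq_add_two_nsmul hn hV _ hf) (n - 1) x
  rw [← mul_nsmul', ← pow_succ, Nat.sub_add_cancel (by omega)] at hy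
  rw [toAdd_pow, hy, zero_add, Nat.sub_add_cancel (by omega), toAdd_one, zero_apply, add_eq_left]
  exact Prod.ext (by rw [Prod.smul_fst, nsmul_eq_mul, ZMod.natCast_self, zero_mul]; rfl)
    (two_pow_nsmul_eq_zero hV (by omega) _)

end AddAut

theorem card_eq_one_or_three_of_odd {n : ℕ} (hn : 1 < n)
    (H : Subgroup (Multiplicative (AddAut (ZMod (2 ^ n) × ZMod 2 × ZMod 2))))
    (hH : Odd (Nat.card H)) : Nat.card H = 1 ∨ Nat.card H = 3 := by
  have hV : ∀ v : ZMod 2 × ZMod 2, 2 • v = 0 := by decide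
  have h24 : Nat.card H ∣ 2 ^ 3 * 3 := by
    have := Subgroup.card_dvd_card_of_coprime (AddAut.sndPerm hn hV)
      (AddAut.pow_two_pow_eq_one_of_sndPerm_eq_one hn hV) H
      ((Nat.coprime_two_right.mpr hH).pow_right n)
    rwa [Nat.card_perm, Nat.card_prod, Nat.card_zmod] at this
  have h3 := ((Nat.coprime_two_right.mpr hH).pow_right 3).dvd_of_dvd_mul_left h24
  exact (Nat.dvd_prime Nat.prime_three).mp h3

def kleinRotation : AddAut (ZMod 2 × ZMod 2) where
  toFun v := (v.2, v.1 + v.2)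
  invFun v := (v.1 + v.2, v.1)
  left_inv := by decide
  right_inv := by decide
  map_add' := by decide

theorem exists_subgroup_card_eq_three (M : Type*) [AddZeroClass M] :
    ∃ H : Subgroup (Multiplicative (AddAut (M × ZMod 2 × ZMod 2))), Nat.card H = 3 := by
  have : Fact (Nat.Prime 3) := ⟨Nat.prime_three⟩
  let σ := Multiplicative.ofAdd ((AddEquiv.refl M).prodCongr kleinRotation)
  have hσ (x : M × ZMod 2 × ZMod 2) : σ.toAdd x = (x.1, kleinRotation x.2) := rfl
  refine ⟨Subgroup.zpowers σ, (Nat.card_zpowers σ).trans (orderOf_eq_prime ?_ fun h ↦ ?_)⟩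
  · have hk : ∀ v, kleinRotation (kleinRotation (kleinRotation v)) = v := by decide
    refine Multiplicative.toAdd.injective (AddEquiv.ext fun x ↦ ?_)
    simp [hσ, succ_nsmul, hk]
  · have hk : kleinRotation (1, 0) = (1, 0) := by
      simpa [hσ] using congr_arg (fun g : Multiplicative _ ↦ (g.toAdd (0, 1, 0)).2) h
    exact absurd hk (by decide)

/-- For `n > 1`, every Sylow 3-subgroup of `Aut(C_{2^n} × C_2 × C_2)` has order 3
(equivalently, the largest odd-order subgroup has order 3), and every odd-order subgroup is
trivial or isomorphic to `C_3`. -/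
theorem stmt_1 (n : ℕ) (hn : 1 < n) :
    (∀ S : Sylow 3 (Multiplicative (AddAut (ZMod (2 ^ n) × ZMod 2 × ZMod 2))), Nat.card S = 3) ∧
    (∃ H : Subgroup (Multiplicative (AddAut (ZMod (2 ^ n) × ZMod 2 × ZMod 2))), Nat.card H = 3) ∧
    (∀ H : Subgroup (Multiplicative (AddAut (ZMod (2 ^ n) × ZMod 2 × ZMod 2))), Odd (Nat.card H) →
      Nat.card H = 1 ∨ Nonempty (H ≃* Multiplicative (ZMod 3))) := by
  have : Fact (Nat.Prime 3) := ⟨Nat.prime_three⟩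
  obtain ⟨H₃, hH₃⟩ := exists_subgroup_card_eq_three (ZMod (2 ^ n))
  refine ⟨fun S ↦ ?_, ⟨H₃, hH₃⟩, fun H hH ↦ ?_⟩
  · have h3 : 3 ∣ Nat.card S := S.dvd_card_of_dvd_card (hH₃ ▸ H₃.card_subgroup_dvd_card)
    have hodd : Odd (Nat.card S) := by
      rw [S.card_eq_multiplicity]
      exact Odd.pow (by decide)
    rcases card_eq_one_or_three_of_odd hn S hodd with h | h
    · simp [h] at h3
    · exact h
  · exact (card_eq_one_or_three_of_odd hn H hH).imp_right
      fun h ↦ ⟨mulEquivOfPrimeCardEq h (by simp)⟩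
end

section
/- Let ω be a primitive cube root of unity in a field K of characteristic zero, and let a_1, a_2, a_3, a_4 ∈ K. Then the four conditions a_1+a_2+a_3+3a_4 ∈ O, a_1+a_2+a_3−a_4 ∈ O, a_1+ωa_2+ω²a_3 ∈ O, and a_1+ω²a_2+ωa_3 ∈ O together hold if and only if 4a_i ∈ O for i = 1,2,3,4 and δ_i a_i − δ_j a_j ∈ O for all 1 ≤ i, j ≤ 4, where δ_1 = δ_2 = δ_3 = 1 and δ_4 = −1. -/
/-!
Both sides are equivalent to `a₀ - a₁, a₀ - a₂, a₀ + a₃, 4a₃ ∈ O`. Writing `c₁, …, c₄` for the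
four values on the left, this is a change of basis over `O`: with `1 + ω + ω² = 0`,
`4a₃ = c₁ - c₂`, `3(a₀ - a₁) = (1 - ω²)c₃ + (1 - ω)c₄`, `3(a₀ - a₂) = (1 - ω)c₃ + (1 - ω²)c₄`,
`3(a₀ + a₃) = c₁ + c₃ + c₄`, and `3` is a unit of `O` because `2` is not and `3 - 2 = 1`.
On the right, every `δᵢaᵢ - δⱼaⱼ` is a difference of two `δ₀a₀ - δₖaₖ`, and each `4aᵢ` is `4a₃`
plus an `O`-combination of those.
-/

theorem IsLocalRing.isUnit_three_of_not_isUnit_two {R : Type*} [CommRing R] [IsLocalRing R]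
    (h2 : ¬IsUnit (2 : R)) : IsUnit (3 : R) := by
  have h : IsUnit ((3 : R) + -2) := by norm_num
  exact (isUnit_or_isUnit_of_isUnit_add h).resolve_right fun h' => h2 (by simpa using h'.neg)

theorem mem_of_mul_mem_of_isUnit {M S : Type*} [Monoid M] [SetLike S M] [SubmonoidClass S M]
    {s : S} {u : s} (hu : IsUnit u) {x : M} (hx : (u : M) * x ∈ s) : x ∈ s := by
  obtain ⟨v, rfl⟩ := hu
  have hvx : x = ((v⁻¹ : sˣ) : s) * ((v : s) * x) := by
    rw [← mul_assoc, ← MulMemClass.coe_mul, Units.inv_mul, OneMemClass.coe_one, one_mul]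
  exact hvx ▸ mul_mem (SetLike.coe_mem _) hx

theorem IsPrimitiveRoot.sq_add_self_add_one {R : Type*} [CommRing R] [IsDomain R] {ω : R}
    (hω : IsPrimitiveRoot ω 3) : ω ^ 2 + ω + 1 = 0 := by
  simpa [Finset.sum_range_succ, add_comm, add_left_comm, add_assoc]
    using hω.geom_sum_eq_zero (by norm_num)

theorem forall_sub_mem_iff {R S ι : Type*} [AddCommGroup R] [SetLike S R] [AddSubgroupClass S R]
    (s : S) (b : ι → R) (i₀ : ι) : (∀ i j, b i - b j ∈ s) ↔ ∀ j, b i₀ - b j ∈ s :=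
  ⟨fun h => h i₀, fun h i j => sub_sub_sub_cancel_left (b j) (b i) (b i₀) ▸ sub_mem (h j) (h i)⟩

theorem a4_congruences_iff {R S : Type*} [CommRing R] [SetLike S R] [SubringClass S R]
    (O : S) (a : Fin 4 → R) :
    ((∀ i, 4 * a i ∈ O) ∧ ∀ i j : Fin 4, (if i = 3 then (-1 : R) else 1) * a i
        - (if j = 3 then (-1 : R) else 1) * a j ∈ O) ↔
    (a 0 - a 1 ∈ O ∧ a 0 - a 2 ∈ O ∧ a 0 + a 3 ∈ O ∧ 4 * a 3 ∈ O) := by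
  rw [forall_sub_mem_iff O (fun i : Fin 4 => (if i = 3 then (-1 : R) else 1) * a i) 0]
  constructor
  · rintro ⟨h4, hδ⟩
    exact ⟨by simpa using hδ 1, by simpa using hδ 2, by simpa using hδ 3, h4 3⟩
  · rintro ⟨h01, h02, h03, h4a3⟩
    have h4a0 : 4 * a 0 ∈ O := by
      convert sub_mem (mul_mem (ofNat_mem O 4) h03) h4a3 using 1
      ring
    have h4a1 : 4 * a 1 ∈ O := by
      convert sub_mem h4a0 (mul_mem (ofNat_mem O 4) h01) using 1
      ring
    have h4a2 : 4 * a 2 ∈ O := by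
      convert sub_mem h4a0 (mul_mem (ofNat_mem O 4) h02) using 1
      ring
    exact ⟨fun i => by fin_cases i <;> assumption, fun j => by fin_cases j <;> simp [h01, h02, h03]⟩

theorem a4_characterValues_mem_iff {K : Type*} [Field K] (O : ValuationSubring K)
    (h2 : ¬IsUnit (2 : O)) {ω : K} (hω : IsPrimitiveRoot ω 3) (hωO : ω ∈ O) (a : Fin 4 → K) :
    (a 0 + a 1 + a 2 + 3 * a 3 ∈ O ∧ a 0 + a 1 + a 2 - a 3 ∈ O ∧
      a 0 + ω * a 1 + ω ^ 2 * a 2 ∈ O ∧ a 0 + ω ^ 2 * a 1 + ω * a 2 ∈ O) ↔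
    (a 0 - a 1 ∈ O ∧ a 0 - a 2 ∈ O ∧ a 0 + a 3 ∈ O ∧ 4 * a 3 ∈ O) := by
  have hq := hω.sq_add_self_add_one
  have hω2 : ω ^ 2 ∈ O := pow_mem hωO 2
  have hdiv3 {x : K} (hx : 3 * x ∈ O) : x ∈ O :=
    mem_of_mul_mem_of_isUnit (IsLocalRing.isUnit_three_of_not_isUnit_two h2) (by exact_mod_cast hx)
  constructor
  · rintro ⟨hc₁, hc₂, hc₃, hc₄⟩
    refine ⟨hdiv3 ?_, hdiv3 ?_, hdiv3 ?_, ?_⟩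
    · convert add_mem (mul_mem (sub_mem (one_mem O) hω2) hc₃)
        (mul_mem (sub_mem (one_mem O) hωO) hc₄) using 1
      linear_combination (a 0 + (2 * ω - 3) * a 1 + (ω ^ 2 - ω) * a 2) * hq
    · convert add_mem (mul_mem (sub_mem (one_mem O) hωO) hc₃)
        (mul_mem (sub_mem (one_mem O) hω2) hc₄) using 1
      linear_combination (a 0 + (ω ^ 2 - ω) * a 1 + (2 * ω - 3) * a 2) * hq
    · convert add_mem hc₁ (add_mem hc₃ hc₄) using 1
      linear_combination (-a 1 - a 2) * hq
    · convert sub_mem hc₁ hc₂ using 1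
      ring
  · rintro ⟨h01, h02, h03, h4a3⟩
    have hc₁ : a 0 + a 1 + a 2 + 3 * a 3 ∈ O := by
      convert sub_mem (sub_mem (mul_mem (ofNat_mem O 3) h03) h01) h02 using 1
      ring
    refine ⟨hc₁, ?_, ?_, ?_⟩
    · convert sub_mem hc₁ h4a3 using 1
      ring
    · convert neg_mem (add_mem (mul_mem hωO h01) (mul_mem hω2 h02)) using 1
      linear_combination a 0 * hq
    · convert neg_mem (add_mem (mul_mem hω2 h01) (mul_mem hωO h02)) using 1
      linear_combination a 0 * hq

theorem stmt_5_general {K : Type*} [Field K]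
    (O : ValuationSubring K) (h2 : ¬ IsUnit (2 : O))
    (ω : K) (hω : IsPrimitiveRoot ω 3) (hωO : ω ∈ O)
    (a : Fin 4 → K) :
    (a 0 + a 1 + a 2 + 3 * a 3 ∈ O ∧
     a 0 + a 1 + a 2 - a 3 ∈ O ∧
     a 0 + ω * a 1 + ω ^ 2 * a 2 ∈ O ∧
     a 0 + ω ^ 2 * a 1 + ω * a 2 ∈ O) ↔
    ((∀ i, 4 * a i ∈ O) ∧
     ∀ i j : Fin 4, (if i = 3 then (-1 : K) else 1) * a i
        - (if j = 3 then (-1 : K) else 1) * a j ∈ O) := by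
  rw [a4_characterValues_mem_iff O h2 hω hωO, a4_congruences_iff]

/-- description of the lattice `CF(A_4, O A_4, O)`.  With `ω` a primitive cube
root of unity in a valuation ring `O` of residue characteristic 2 inside a characteristic-zero
field `K`, and `a : Fin 4 → K`, the four conditions `a_1+a_2+a_3+3a_4 ∈ O`,
`a_1+a_2+a_3−a_4 ∈ O`, `a_1+ωa_2+ω²a_3 ∈ O`, `a_1+ω²a_2+ωa_3 ∈ O` hold together iff
`4a_i ∈ O` for all `i` and `δ_i a_i − δ_j a_j ∈ O` for all `i, j`, where
`δ_1 = δ_2 = δ_3 = 1` and `δ_4 = −1`. -/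
theorem stmt_5 {K : Type*} [Field K] [CharZero K]
    (O : ValuationSubring K) (h2 : ¬ IsUnit (2 : O))
    (ω : K) (hω : IsPrimitiveRoot ω 3) (hωO : ω ∈ O)
    (a : Fin 4 → K) :
    (a 0 + a 1 + a 2 + 3 * a 3 ∈ O ∧
     a 0 + a 1 + a 2 - a 3 ∈ O ∧
     a 0 + ω * a 1 + ω ^ 2 * a 2 ∈ O ∧
     a 0 + ω ^ 2 * a 1 + ω * a 2 ∈ O) ↔
    ((∀ i, 4 * a i ∈ O) ∧
     ∀ i j : Fin 4, (if i = 3 then (-1 : K) else 1) * a i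
        - (if j = 3 then (-1 : K) else 1) * a j ∈ O) :=
  stmt_5_general O h2 ω hω hωO a
end

section
/- The group of isometries of the lattice Z Irr(A_4) (with the standard inner product in which the four irreducible characters χ_1, χ_2, χ_3, χ_4 of A_4 form an orthonormal basis) that preserve the sublattice Z prj(A_4) spanned by χ_1+χ_4, χ_2+χ_4, χ_3+χ_4 is precisely the set of maps sending each χ_j to ε δ_j δ_{σ(j)} χ_{σ(j)}, for σ ∈ S_4 and ε ∈ {±1}, where δ_1 = δ_2 = δ_3 = 1 and δ_4 = −1; this group is isomorphic to C_2 × S_4. -/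
/-!
An isometry of `ℤ⁴` maps each basis vector to a vector of norm `1`, i.e. to some `±e_i`, so it
is a signed permutation `e_j ↦ s_j e_{σ j}`. Writing `δ = (1, 1, 1, -1)`, the sublattice
`ℤprj(A_4)` is `δ^⊥`, and it contains `δ_p e_p - δ_q e_q`; the image of that vector lies in
`δ^⊥` exactly when `s_p δ_p δ_{σ p} = s_q δ_q δ_{σ q}`, so `ε := s_j δ_j δ_{σ j}` does not
depend on `j`. Conversely, the map `e_j ↦ ε δ_j δ_{σ j} e_{σ j}` is `ε D P_σ D` with
`D = diag δ`; since `D² = 1`, `(ε, σ) ↦ ε D P_σ D` is an injective homomorphism from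
`ℤˣ × S_4`, and these maps are isometries sending `δ` to `εδ`.
-/

open Equiv Matrix

section SignedPermutation

variable {ι : Type*} [Fintype ι] [DecidableEq ι]

lemma exists_eq_single_of_dotProduct_self_eq_one {v : ι → ℤ} (hv : v ⬝ᵥ v = 1) :
    ∃ i, ∃ s : ℤˣ, v = Pi.single i (s : ℤ) := by
  obtain ⟨i, hi⟩ : ∃ i, v i ≠ 0 := by
    by_contra! h
    simp [dotProduct, h] at hv
  have hsplit : v i * v i + ∑ j ∈ Finset.univ.erase i, v j * v j = 1 :=
    (Finset.add_sum_erase _ (fun j => v j * v j) (Finset.mem_univ i)).trans hv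
  have hrest : 0 ≤ ∑ j ∈ Finset.univ.erase i, v j * v j :=
    Finset.sum_nonneg fun j _ => mul_self_nonneg (v j)
  have hvi_pos : 0 < v i * v i := mul_self_pos.2 hi
  have hvi : v i * v i = 1 := by linarith
  have hzero : ∀ j ≠ i, v j = 0 := by
    have hrest0 : ∑ j ∈ Finset.univ.erase i, v j * v j = 0 := by linarith
    rw [Finset.sum_eq_zero_iff_of_nonneg fun j _ => mul_self_nonneg (v j)] at hrest0
    exact fun j hj => mul_self_eq_zero.1 (hrest0 j (Finset.mem_erase.2 ⟨hj, Finset.mem_univ j⟩))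
  obtain ⟨s, hs⟩ := IsUnit.of_mul_eq_one _ hvi
  refine ⟨i, s, funext fun j => ?_⟩
  by_cases hj : j = i
  · subst hj; simp [hs]
  · simp [hj, hzero j hj]

lemma exists_perm_of_isometry (f : (ι → ℤ) →ₗ[ℤ] (ι → ℤ)) (hf : ∀ a b, f a ⬝ᵥ f b = a ⬝ᵥ b) :
    ∃ (σ : Perm ι) (s : ι → ℤˣ), ∀ j, f (Pi.single j 1) = Pi.single (σ j) (s j : ℤ) := by
  choose idx s hs using fun j : ι =>
    exists_eq_single_of_dotProduct_self_eq_one (v := f (Pi.single j 1)) (by simp [hf])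
  have hinj : Function.Injective idx := by
    intro j k hjk
    by_contra hne
    have h := hf (Pi.single j 1) (Pi.single k 1)
    simp [hs, hjk, hne] at h
  exact ⟨Equiv.ofBijective idx (Finite.injective_iff_bijective.1 hinj), s, hs⟩

end SignedPermutation

section TwistedPermutation

variable {ι : Type*} (δ : ι → ℤˣ)

/-- `ε • (D P_σ D)` for `D = diag δ` and `P_σ` the permutation matrix of `σ`. -/
def twistedPermEnd : ℤˣ × Perm ι →* Module.End ℤ (ι → ℤ) where
  toFun p :=
    { toFun a i := ((p.1 * δ i * δ (p.2⁻¹ i) : ℤˣ) : ℤ) * a (p.2⁻¹ i)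
      map_add' a b := funext fun i => by simp only [Pi.add_apply, mul_add]
      map_smul' c a := funext fun i => by
        simp only [Pi.smul_apply, smul_eq_mul, RingHom.id_apply]; ring }
  map_one' := LinearMap.ext fun a => funext fun i => by simp
  map_mul' p q := LinearMap.ext fun a => funext fun i => by
    simp only [Prod.fst_mul, Prod.snd_mul, _root_.mul_inv_rev, Perm.mul_apply, LinearMap.coe_mk,
      AddHom.coe_mk, Module.End.mul_apply, Units.val_mul]
    linear_combination -(p.1 * q.1 * δ i * δ (q.2⁻¹ (p.2⁻¹ i)) * a (q.2⁻¹ (p.2⁻¹ i)) : ℤ) *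
      Int.units_coe_mul_self (δ (p.2⁻¹ i))

def twistedPerm : ℤˣ × Perm ι →* ((ι → ℤ) ≃ₗ[ℤ] (ι → ℤ)) :=
  (LinearMap.GeneralLinearGroup.generalLinearEquiv ℤ (ι → ℤ)).toMonoidHom.comp
    (twistedPermEnd δ).toHomUnits

lemma twistedPerm_apply (p : ℤˣ × Perm ι) (a : ι → ℤ) (i : ι) :
    twistedPerm δ p a i = ((p.1 * δ i * δ (p.2⁻¹ i) : ℤˣ) : ℤ) * a (p.2⁻¹ i) :=
  rfl

lemma twistedPerm_single [DecidableEq ι] (ε : ℤˣ) (σ : Perm ι) (j : ι) :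
    twistedPerm δ (ε, σ) (Pi.single j 1) = Pi.single (σ j) ((ε * δ j * δ (σ j) : ℤˣ) : ℤ) := by
  ext i
  rw [twistedPerm_apply]
  obtain ⟨i, rfl⟩ := σ.surjective i
  by_cases hij : i = j
  · subst hij; simp [mul_right_comm]
  · simp [hij]

variable [Fintype ι]

lemma twistedPerm_dotProduct (p : ℤˣ × Perm ι) (a b : ι → ℤ) :
    twistedPerm δ p a ⬝ᵥ twistedPerm δ p b = a ⬝ᵥ b := by
  simp only [dotProduct, twistedPerm_apply]
  refine Fintype.sum_equiv p.2⁻¹ _ _ fun i => ?_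
  linear_combination (a (p.2⁻¹ i) * b (p.2⁻¹ i)) * Int.units_coe_mul_self (p.1 * δ i * δ (p.2⁻¹ i))

lemma sum_mul_twistedPerm (p : ℤˣ × Perm ι) (a : ι → ℤ) :
    ∑ i, (δ i : ℤ) * twistedPerm δ p a i = p.1 * ∑ i, (δ i : ℤ) * a i := by
  rw [Finset.mul_sum]
  refine Fintype.sum_equiv p.2⁻¹ _ _ fun i => ?_
  simp only [twistedPerm_apply, Units.val_mul]
  linear_combination (p.1 * δ (p.2⁻¹ i) * a (p.2⁻¹ i) : ℤ) * Int.units_coe_mul_self (δ i)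

variable [DecidableEq ι]

lemma twistedPerm_eq_iff (ε : ℤˣ) (σ : Perm ι) (f : (ι → ℤ) ≃ₗ[ℤ] (ι → ℤ)) :
    twistedPerm δ (ε, σ) = f ↔
      ∀ j, f (Pi.single j 1) = Pi.single (σ j) ((ε * δ j * δ (σ j) : ℤˣ) : ℤ) := by
  simp only [← twistedPerm_single]
  refine ⟨fun h j => by rw [h], fun h => (Pi.basisFun ℤ ι).ext' fun j => ?_⟩
  simp [h]

lemma twistedPerm_injective [Nonempty ι] : Function.Injective (twistedPerm δ) := by
  refine (injective_iff_map_eq_one _).2 fun ⟨ε, σ⟩ h => ?_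
  have hsingle := (twistedPerm_eq_iff δ ε σ 1).1 h
  have hσ : ∀ j, σ j = j := fun j => by
    by_contra hne
    simpa [Ne.symm hne] using congrFun (hsingle j) j
  have hε := congrFun (hsingle (Classical.arbitrary ι)) (Classical.arbitrary ι)
  simp only [hσ, mul_assoc, Int.units_mul_self, mul_one] at hε
  ext <;> simp_all

theorem exists_twistedPerm_eq [Nonempty ι] (f : (ι → ℤ) ≃ₗ[ℤ] (ι → ℤ))
    (hf : ∀ a b, f a ⬝ᵥ f b = a ⬝ᵥ b)
    (hδ : ∀ a, ∑ i, (δ i : ℤ) * a i = 0 → ∑ i, (δ i : ℤ) * f a i = 0) :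
    ∃ p, twistedPerm δ p = f := by
  obtain ⟨σ, s, hs⟩ := exists_perm_of_isometry f.toLinearMap hf
  simp only [LinearEquiv.coe_coe] at hs
  have hconst : ∀ p q, s p * δ p * δ (σ p) = s q * δ q * δ (σ q) := by
    intro p q
    have h := hδ ((δ p : ℤ) • Pi.single p 1 - (δ q : ℤ) • Pi.single q 1)
      (by simp [Pi.single_apply, mul_sub, Finset.sum_sub_distrib])
    rw [map_sub, map_smul, map_smul, hs, hs] at h
    simp [Pi.single_apply, mul_sub, Finset.sum_sub_distrib] at h
    ext
    push_cast
    linear_combination h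
  obtain ⟨j₀⟩ := ‹Nonempty ι›
  refine ⟨(s j₀ * δ j₀ * δ (σ j₀), σ), (twistedPerm_eq_iff δ _ σ f).2 fun j => ?_⟩
  rw [hs, ← hconst j j₀, mul_right_comm (s j * δ j) (δ (σ j)) (δ j)]
  simp [mul_assoc]

theorem range_twistedPerm [Nonempty ι] :
    Set.range (twistedPerm δ) = {f | (∀ a b, f a ⬝ᵥ f b = a ⬝ᵥ b) ∧
      ∀ a, ∑ i, (δ i : ℤ) * a i = 0 → ∑ i, (δ i : ℤ) * f a i = 0} := by
  ext f
  constructor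
  · rintro ⟨p, rfl⟩
    exact ⟨twistedPerm_dotProduct δ p, fun a ha => by rw [sum_mul_twistedPerm, ha, mul_zero]⟩
  · rintro ⟨hf, hδ⟩
    exact exists_twistedPerm_eq δ f hf hδ

end TwistedPermutation

/-- The paper's `δ`, with indices shifted down by one; `ℤprj(A_4) = δ^⊥`. -/
def a4Delta (i : Fin 4) : ℤˣ := if i = 3 then -1 else 1

lemma coe_a4Delta (i : Fin 4) : (a4Delta i : ℤ) = if i = 3 then -1 else 1 := by
  unfold a4Delta; split_ifs <;> rfl

lemma sum_a4Delta_mul_eq_zero_iff (a : Fin 4 → ℤ) :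
    ∑ i, (a4Delta i : ℤ) * a i = 0 ↔ a 0 + a 1 + a 2 = a 3 := by
  simp only [Fin.sum_univ_four, coe_a4Delta]
  simp
  omega

/-- identifying `ℤIrr(A_4)` with `ℤ^4` via the orthonormal basis
`χ_1, χ_2, χ_3, χ_4`, the isometries of `ℤIrr(A_4)` preserving the sublattice
`ℤprj(A_4) = {a : a_1+a_2+a_3 = a_4}` (spanned by `χ_1+χ_4, χ_2+χ_4, χ_3+χ_4`) are exactly the
maps `χ_j ↦ ε δ_j δ_{σ(j)} χ_{σ(j)}` for `σ ∈ S_4`, `ε ∈ {±1}`, with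
`δ_1 = δ_2 = δ_3 = 1 = -δ_4`; and this group of isometries is isomorphic to `C_2 × S_4`
(expressed here via an injective monoid homomorphism from `C_2 × S_4` with image exactly the
set of such isometries). -/
theorem stmt_11 :
    (∀ f : (Fin 4 → ℤ) ≃ₗ[ℤ] (Fin 4 → ℤ),
      ((∀ a b : Fin 4 → ℤ, ∑ i, f a i * f b i = ∑ i, a i * b i) ∧
        (∀ a : Fin 4 → ℤ, a 0 + a 1 + a 2 = a 3 → f a 0 + f a 1 + f a 2 = f a 3)) ↔
      ∃ (σ : Equiv.Perm (Fin 4)) (ε : ℤ), (ε = 1 ∨ ε = -1) ∧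
        ∀ j : Fin 4, f (Pi.single j 1) =
          (ε * (if j = 3 then (-1 : ℤ) else 1) * (if σ j = 3 then (-1 : ℤ) else 1)) •
            Pi.single (σ j) (1 : ℤ)) ∧
    ∃ e : Multiplicative (ZMod 2) × Equiv.Perm (Fin 4) →* ((Fin 4 → ℤ) ≃ₗ[ℤ] (Fin 4 → ℤ)),
      Function.Injective e ∧
      Set.range e = {f : (Fin 4 → ℤ) ≃ₗ[ℤ] (Fin 4 → ℤ) |
        (∀ a b : Fin 4 → ℤ, ∑ i, f a i * f b i = ∑ i, a i * b i) ∧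
        (∀ a : Fin 4 → ℤ, a 0 + a 1 + a 2 = a 3 → f a 0 + f a 1 + f a 2 = f a 3)} := by
  have hrange := range_twistedPerm a4Delta
  simp only [sum_a4Delta_mul_eq_zero_iff] at hrange
  let c₂ : Multiplicative (ZMod 2) ≃* ℤˣ := mulEquivOfPrimeCardEq (p := 2) (by simp) (by simp)
  refine ⟨fun f => ?_, (twistedPerm a4Delta).comp (c₂.prodCongr (MulEquiv.refl _)).toMonoidHom,
    (twistedPerm_injective a4Delta).comp (MulEquiv.injective _), ?_⟩
  · refine (Set.ext_iff.1 hrange f).symm.trans ?_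
    rw [Set.mem_range, Prod.exists, exists_comm]
    simp only [twistedPerm_eq_iff, Units.val_mul, coe_a4Delta, ← Pi.single_smul, smul_eq_mul,
      mul_one]
    exact exists_congr fun σ => ⟨fun ⟨u, hu⟩ => ⟨u, Int.isUnit_iff.1 u.isUnit, hu⟩,
      fun ⟨_, hε, h⟩ => ⟨(Int.isUnit_iff.2 hε).unit, h⟩⟩
  · rw [MonoidHom.coe_comp, MulEquiv.coe_toMonoidHom, (MulEquiv.surjective _).range_comp]
    exact hrange
end

section
/- Let ζ be a primitive 2^n-th root of unity in a characteristic-zero field and let α = ∑_{i=0}^{2^m−1} ζ^{l_i} be a sum of 2^m powers of ζ. Then the product over all σ in Gal(Q(ζ)/Q) of σ(α) is a rational integer, and its absolute value (under any complex embedding) is at most 2^{m·[Q(ζ):Q]}, with equality if and only if all ζ^{l_i} are equal. -/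
/-!
The product of the Galois conjugates of `α` is the norm `N_{K/ℚ}(α)`, an integral rational
number because `α` is a sum of roots of unity. Under `φ`, each conjugate `σ α` becomes a sum of
`2^m` complex numbers of modulus one, so has modulus at most `2^m`; the product reaches the bound
`(2^m)^[K:ℚ]` only if every factor does, in particular `α` itself. Equality in the triangle
inequality for unit vectors of an inner product space forces them all to coincide.
-/

open Finset Module

theorem exists_int_norm_eq_of_isIntegral {K : Type*} [Field K] [Algebra ℚ K] {x : K}
    (hx : IsIntegral ℤ x) : ∃ z : ℤ, Algebra.norm ℚ x = z :=
  (IsIntegrallyClosed.isIntegral_iff.mp (Algebra.isIntegral_norm ℚ hx)).imp fun _ h ↦ h.symm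

theorem isIntegral_int_of_pow_eq_one {R : Type*} [Ring R] {N : ℕ} (hN : N ≠ 0) {x : R}
    (hx : x ^ N = 1) : IsIntegral ℤ x :=
  IsIntegral.of_pow (Nat.pos_of_ne_zero hN) (hx ▸ isIntegral_one)

theorem eq_of_norm_eq_one_of_norm_sum_eq_card {F ι : Type*} [NormedAddCommGroup F]
    [InnerProductSpace ℝ F] [Fintype ι] {x : ι → F} (hx : ∀ i, ‖x i‖ = 1)
    (hsum : ‖∑ i, x i‖ = Fintype.card ι) (i j : ι) : x i = x j := by
  set s := ∑ i, x i
  -- `⟪s, s⟫ = ∑ k, ⟪s, x k⟫` with each term `≤ ‖s‖`; equality forces `s = ‖s‖ • x k`.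
  have hle : ∀ k ∈ univ, inner ℝ s (x k) ≤ ‖s‖ := fun k _ ↦ by
    simpa [hx k] using real_inner_le_norm s (x k)
  have hinner : ∑ k, inner ℝ s (x k) = ∑ _k : ι, ‖s‖ := by
    rw [← inner_sum, real_inner_self_eq_norm_sq, sum_const, card_univ, nsmul_eq_mul, ← hsum, sq]
  have hray : ∀ k, s = ‖s‖ • x k := fun k ↦ by
    have h := (sum_eq_sum_iff_of_le hle).mp hinner k (mem_univ k)
    rw [← mul_one ‖s‖, ← hx k] at h
    simpa [hx k] using (inner_eq_norm_mul_iff_real.mp h)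
  have hs : ‖s‖ ≠ 0 := by
    rw [hsum]; exact Nat.cast_ne_zero.mpr (Fintype.card_pos_iff.mpr ⟨i⟩).ne'
  exact smul_right_injective F hs ((hray i).symm.trans (hray j))

theorem Finset.prod_eq_pow_card_iff_of_le {ι : Type*} [Fintype ι] {a : ι → ℝ} {c : ℝ}
    (h0 : ∀ i, 0 ≤ a i) (hc : ∀ i, a i ≤ c) :
    ∏ i, a i = c ^ Fintype.card ι ↔ ∀ i, a i = c := by
  classical
  refine ⟨fun h i ↦ (hc i).eq_of_not_lt fun hlt ↦ h.not_lt ?_, fun h ↦ by simp [h]⟩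
  have hrest : ∏ k ∈ univ.erase i, a k ≤ c ^ (Fintype.card ι - 1) := by
    simpa [card_erase_of_mem] using
      prod_le_prod (s := univ.erase i) (fun k _ ↦ h0 k) (fun k _ ↦ hc k)
  calc ∏ k, a k = a i * ∏ k ∈ univ.erase i, a k := (mul_prod_erase _ _ (mem_univ i)).symm
    _ ≤ a i * c ^ (Fintype.card ι - 1) := mul_le_mul_of_nonneg_left hrest (h0 i)
    _ < c * c ^ (Fintype.card ι - 1) :=
        mul_lt_mul_of_pos_right hlt (pow_pos ((h0 i).trans_lt hlt) _)
    _ = c ^ Fintype.card ι := by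
        rw [← pow_succ', Nat.sub_add_cancel (Fintype.card_pos_iff.mpr ⟨i⟩)]

section RootsOfUnity

variable {K ι : Type*} [DivisionRing K] [Fintype ι] {N : ℕ} {u : ι → K}

theorem norm_map_eq_one_of_pow_eq_one (ψ : K →+* ℂ) (hN : N ≠ 0) {x : K} (hx : x ^ N = 1) :
    ‖ψ x‖ = 1 :=
  Complex.norm_eq_one_of_pow_eq_one (by rw [← map_pow, hx, map_one]) hN

theorem norm_map_sum_le_card (ψ : K →+* ℂ) (hN : N ≠ 0) (hu : ∀ i, u i ^ N = 1) :
    ‖ψ (∑ i, u i)‖ ≤ Fintype.card ι := by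
  rw [map_sum]
  refine (norm_sum_le _ _).trans_eq ?_
  simp [norm_map_eq_one_of_pow_eq_one ψ hN (hu _)]

theorem norm_map_sum_eq_card_iff (ψ : K →+* ℂ) (hN : N ≠ 0) (hu : ∀ i, u i ^ N = 1) :
    ‖ψ (∑ i, u i)‖ = Fintype.card ι ↔ ∀ i j, u i = u j := by
  refine ⟨fun h i j ↦ ψ.injective ?_, fun h ↦ ?_⟩
  · rw [map_sum] at h
    exact eq_of_norm_eq_one_of_norm_sum_eq_card
      (fun k ↦ norm_map_eq_one_of_pow_eq_one ψ hN (hu k)) h i j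
  · rcases isEmpty_or_nonempty ι with hι | ⟨⟨i₀⟩⟩
    · simp
    · simp [← h i₀, norm_map_eq_one_of_pow_eq_one ψ hN (hu i₀)]

end RootsOfUnity

theorem stmt_17_general (n m : ℕ)
    (K : Type*) [Field K] [Algebra ℚ K]
    [IsCyclotomicExtension {(2 : ℕ) ^ n} ℚ K]
    (ζ : K) (hζ : IsPrimitiveRoot ζ (2 ^ n))
    (l : Fin (2 ^ m) → ℤ) :
    (∃ z : ℤ, ∏ᶠ σ : K ≃ₐ[ℚ] K, σ (∑ i, ζ ^ (l i)) = (z : K)) ∧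
    ∀ φ : K →+* ℂ,
      ‖φ (∏ᶠ σ : K ≃ₐ[ℚ] K, σ (∑ i, ζ ^ (l i)))‖ ≤
        2 ^ (m * Module.finrank ℚ K) ∧
      (‖φ (∏ᶠ σ : K ≃ₐ[ℚ] K, σ (∑ i, ζ ^ (l i)))‖ =
          2 ^ (m * Module.finrank ℚ K) ↔ ∀ i j, ζ ^ (l i) = ζ ^ (l j)) := by
  have := IsCyclotomicExtension.finiteDimensional {(2 : ℕ) ^ n} ℚ K
  have := IsCyclotomicExtension.isGalois {(2 : ℕ) ^ n} ℚ K
  set α := ∑ i, ζ ^ l i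
  have h2n : 2 ^ n ≠ 0 := NeZero.ne _
  have hu : ∀ i, (ζ ^ l i) ^ 2 ^ n = 1 := fun i ↦ by
    rw [← zpow_natCast, ← zpow_mul, mul_comm, zpow_mul, zpow_natCast, hζ.pow_eq_one, one_zpow]
  rw [finprod_eq_prod_of_fintype]
  refine ⟨?_, fun φ ↦ ?_⟩
  · obtain ⟨z, hz⟩ := exists_int_norm_eq_of_isIntegral (x := α)
      (IsIntegral.sum _ fun i _ ↦ isIntegral_int_of_pow_eq_one h2n (hu i))
    exact ⟨z, by rw [← Algebra.norm_eq_prod_automorphisms, hz, map_intCast]⟩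
  have hcard_fin : (Fintype.card (Fin (2 ^ m)) : ℝ) = 2 ^ m := by simp
  have hle (σ : K ≃ₐ[ℚ] K) : ‖φ (σ α)‖ ≤ 2 ^ m := by
    rw [← hcard_fin]; exact norm_map_sum_le_card (φ.comp σ) h2n hu
  have heq (σ : K ≃ₐ[ℚ] K) : ‖φ (σ α)‖ = 2 ^ m ↔ ∀ i j, ζ ^ l i = ζ ^ l j := by
    rw [← hcard_fin]; exact norm_map_sum_eq_card_iff (φ.comp σ) h2n hu
  have hcard : (2 : ℝ) ^ (m * finrank ℚ K) = (2 ^ m) ^ Fintype.card (K ≃ₐ[ℚ] K) := by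
    rw [pow_mul, ← Nat.card_eq_fintype_card, IsGalois.card_aut_eq_finrank]
  rw [map_prod, norm_prod, hcard, prod_eq_pow_card_iff_of_le (fun _ ↦ norm_nonneg _) hle]
  refine ⟨(prod_le_prod (fun _ _ ↦ norm_nonneg _) fun σ _ ↦ hle σ).trans_eq (by simp), ?_⟩
  simp only [heq, forall_const]

/-- Let `K = ℚ(ζ)` be the `2^n`-th cyclotomic field and
`α = ∑_{i<2^m} ζ^{l_i}` a sum of `2^m` powers of a primitive `2^n`-th root of unity `ζ`.
Then the product of `σ(α)` over all `σ ∈ Gal(K/ℚ)` is a rational integer, and under any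
complex embedding of `K` its absolute value is at most `2^{m·[K:ℚ]}`, with equality iff all
the `ζ^{l_i}` are equal. -/
theorem stmt_17 (n m : ℕ) (hn : 0 < n) (hm : 0 < m)
    (K : Type*) [Field K] [CharZero K] [Algebra ℚ K] [FiniteDimensional ℚ K]
    [IsCyclotomicExtension {(2 : ℕ) ^ n} ℚ K]
    (ζ : K) (hζ : IsPrimitiveRoot ζ (2 ^ n))
    (l : Fin (2 ^ m) → ℤ) :
    (∃ z : ℤ, ∏ᶠ σ : K ≃ₐ[ℚ] K, σ (∑ i, ζ ^ (l i)) = (z : K)) ∧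
    ∀ φ : K →+* ℂ,
      ‖φ (∏ᶠ σ : K ≃ₐ[ℚ] K, σ (∑ i, ζ ^ (l i)))‖ ≤
        2 ^ (m * Module.finrank ℚ K) ∧
      (‖φ (∏ᶠ σ : K ≃ₐ[ℚ] K, σ (∑ i, ζ ^ (l i)))‖ =
          2 ^ (m * Module.finrank ℚ K) ↔ ∀ i j, ζ ^ (l i) = ζ ^ (l j)) :=
  stmt_17_general n m K ζ hζ l
end

section
/- Let P be a p-subgroup of a direct product of finite groups H = H_1 × ⋯ × H_t. If P is a radical p-subgroup of H (i.e., P = O_p(N_H(P))), then P = P_1 × ⋯ × P_t where P_i = P ∩ H_i, and each P_i is a radical p-subgroup of H_i. -/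
/-!
Let `Q = ∏ πᵢ(P)` be the product of the projections of `P`. It is a `p`-group containing `P` and
normalized by `N(P)`, so `Q ∩ N(P)` is a normal `p`-subgroup of `N(P)` and lies in
`O_p(N(P)) = P`. Thus `N_Q(P) = P`, and since the finite `p`-group `Q` is nilpotent (normalizers
grow), `P = Q = ∏ Pᵢ`. Then `N(P) = ∏ N(Pᵢ)`, and `∏ O_p(N(Pᵢ))` is a normal `p`-subgroup of
`N(P)`, hence contained in `P`; comparing components gives `O_p(N(Pᵢ)) ≤ Pᵢ`.
-/

/-- The `p`-core `O_p(G)`: the largest normal `p`-subgroup of `G` (the join of all normal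
`p`-subgroups). -/
def pCore (p : ℕ) (G : Type*) [Group G] : Subgroup G :=
  sSup {Q : Subgroup G | Q.Normal ∧ IsPGroup p Q}

/-- `P` is a radical `p`-subgroup of `G`: a `p`-subgroup with `P = O_p(N_G(P))`. -/
def IsRadicalPSubgroup (p : ℕ) {G : Type*} [Group G] (P : Subgroup G) : Prop :=
  IsPGroup p P ∧ Subgroup.map (Subgroup.normalizer (P : Set G)).subtype (pCore p ↥(Subgroup.normalizer (P : Set G))) = P

open Subgroup

section pCore

variable {p : ℕ} {G : Type*} [Group G]

instance pCore_normal : (pCore p G).Normal :=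
  sSup_normal _ fun _ hQ => hQ.1

theorem isPGroup_pCore : IsPGroup p (pCore p G) :=
  Sylow.sSup_of_normal _ (fun _ hQ => hQ.2) fun _ hQ => hQ.1

theorem le_pCore {Q : Subgroup G} [Q.Normal] (hQ : IsPGroup p Q) : Q ≤ pCore p G :=
  le_sSup ⟨inferInstance, hQ⟩

theorem le_map_pCore {N K : Subgroup G} (hKN : K ≤ N) (hK : IsPGroup p K)
    (hNK : N ≤ normalizer (K : Set G)) : K ≤ (pCore p N).map N.subtype := by
  have : (K.subgroupOf N).Normal := (normal_subgroupOf_iff_le_normalizer hKN).2 hNK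
  simpa [subgroupOf_map_subtype, inf_of_le_left hKN] using
    map_mono (f := N.subtype) (le_pCore (Q := K.subgroupOf N) hK.comap_subtype)

theorem le_normalizer_map_pCore (N : Subgroup G) :
    N ≤ normalizer ((pCore p N).map N.subtype : Set G) := by
  simpa [normalizer_eq_top, ← MonoidHom.range_eq_map] using
    le_normalizer_map (H := pCore p N) N.subtype

end pCore

section Radical

variable {p : ℕ} {G : Type*} [Group G] {P : Subgroup G}

theorem isRadicalPSubgroup_iff_map_pCore_le :
    IsRadicalPSubgroup p P ↔
      IsPGroup p P ∧ (pCore p (normalizer (P : Set G))).map (normalizer (P : Set G)).subtype ≤ P :=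
  ⟨fun h => ⟨h.1, h.2.le⟩, fun h => ⟨h.1, h.2.antisymm (le_map_pCore le_normalizer h.1 le_rfl)⟩⟩

theorem IsRadicalPSubgroup.le_of_le_normalizer (hP : IsRadicalPSubgroup p P) {K : Subgroup G}
    (hKN : K ≤ normalizer (P : Set G)) (hK : IsPGroup p K)
    (hNK : normalizer (P : Set G) ≤ normalizer (K : Set G)) : K ≤ P :=
  hP.2 ▸ le_map_pCore hKN hK hNK

end Radical

theorem Subgroup.eq_of_le_of_inf_normalizer_le {G : Type*} [Group G] {P Q : Subgroup G}
    [Group.IsNilpotent Q] (hPQ : P ≤ Q) (h : Q ⊓ normalizer (P : Set G) ≤ P) : P = Q := by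
  refine hPQ.antisymm (subgroupOf_eq_top.1 (not_lt_top_iff.1 fun hlt => ?_))
  obtain ⟨x, hxN, hxP⟩ := SetLike.exists_of_lt (Group.normalizerCondition_of_isNilpotent _ hlt)
  rw [← subgroupOf_normalizer_eq hPQ, mem_subgroupOf] at hxN
  exact hxP (mem_subgroupOf.2 (h ⟨x.2, hxN⟩))

section Pi

variable {ι : Type*} {H : ι → Type*} [∀ i, Group (H i)]

theorem Subgroup.comap_mulSingle_pi [DecidableEq ι] (K : ∀ i, Subgroup (H i)) (i : ι) :
    (pi Set.univ K).comap (MonoidHom.mulSingle H i) = K i := by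
  ext x; simp

theorem Subgroup.normalizer_pi [DecidableEq ι] (K : ∀ i, Subgroup (H i)) :
    normalizer (pi Set.univ K : Set (∀ i, H i)) =
      pi Set.univ fun i => normalizer (K i : Set (H i)) := by
  ext g
  rw [mem_normalizer_iff, mem_pi]
  refine ⟨fun hg i _ => mem_normalizer_iff.2 fun x => ?_,
    fun hg x => forall₂_congr fun i hi => mem_normalizer_iff.1 (hg i hi) (x i)⟩
  have hconj : g * Pi.mulSingle i x * g⁻¹ = Pi.mulSingle i (g i * x * (g i)⁻¹) := by
    ext j; by_cases hj : j = i
    · subst hj; simp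
    · simp [hj]
  simpa [hconj] using hg (Pi.mulSingle i x)

theorem IsPGroup.pi_univ {p : ℕ} [Finite ι] {K : ∀ i, Subgroup (H i)}
    (hK : ∀ i, IsPGroup p (K i)) :
    IsPGroup p (pi Set.univ K) := by
  have := Fintype.ofFinite ι
  intro g
  choose k hk using fun i => hK i ⟨g.1 i, g.2 i trivial⟩
  refine ⟨Finset.univ.sup k, Subtype.ext (funext fun i => ?_)⟩
  have hi : g.1 i ^ p ^ k i = 1 := by simpa using congrArg Subtype.val (hk i)
  simp only [SubgroupClass.coe_pow, Pi.pow_apply, OneMemClass.coe_one, Pi.one_apply]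
  exact orderOf_dvd_iff_pow_eq_one.1 ((orderOf_dvd_of_pow_eq_one hi).trans
    (pow_dvd_pow p (Finset.le_sup (Finset.mem_univ i))))

end Pi

section RadicalPi

variable {p : ℕ} {ι : Type*} [Finite ι] {H : ι → Type*} [∀ i, Group (H i)]

theorem IsRadicalPSubgroup.eq_pi_map_eval [Fact p.Prime] [∀ i, Finite (H i)]
    {P : Subgroup (∀ i, H i)} (hP : IsRadicalPSubgroup p P) :
    P = pi Set.univ fun i => P.map (Pi.evalMonoidHom H i) := by
  classical
  set Q := pi Set.univ fun i => P.map (Pi.evalMonoidHom H i)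
  have hPQ : P ≤ Q := le_pi_iff.2 fun i _ => le_comap_map _ P
  have hQ : IsPGroup p Q := IsPGroup.pi_univ fun i => hP.1.map _
  have hNQ : normalizer (P : Set (∀ i, H i)) ≤ normalizer (Q : Set (∀ i, H i)) := by
    rw [normalizer_pi]
    exact le_pi_iff.2 fun i _ => map_le_iff_le_comap.1 (le_normalizer_map _)
  have : Group.IsNilpotent Q := hQ.isNilpotent
  refine eq_of_le_of_inf_normalizer_le hPQ
    (hP.le_of_le_normalizer inf_le_right hQ.to_inf_left ?_)
  exact (le_inf hNQ le_normalizer).trans inf_normalizer_le_normalizer_inf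

theorem IsRadicalPSubgroup.eq_pi_comap_mulSingle [Fact p.Prime] [∀ i, Finite (H i)]
    [DecidableEq ι] {P : Subgroup (∀ i, H i)} (hP : IsRadicalPSubgroup p P) :
    P = pi Set.univ fun i => P.comap (MonoidHom.mulSingle H i) := by
  obtain ⟨K, rfl⟩ : ∃ K, P = pi Set.univ K := ⟨_, hP.eq_pi_map_eval⟩
  simp only [comap_mulSingle_pi]

theorem IsRadicalPSubgroup.of_pi {K : ∀ i, Subgroup (H i)}
    (hK : IsRadicalPSubgroup p (pi Set.univ K)) (i : ι) : IsRadicalPSubgroup p (K i) := by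
  classical
  set O := fun j =>
    (pCore p (normalizer (K j : Set (H j)))).map (normalizer (K j : Set (H j))).subtype
  have hO : pi Set.univ O ≤ pi Set.univ K := by
    refine hK.le_of_le_normalizer ?_ (IsPGroup.pi_univ fun j => isPGroup_pCore.map _) ?_
    · rw [normalizer_pi]
      exact fun x hx j _ => map_subtype_le _ (hx j trivial)
    · rw [normalizer_pi, normalizer_pi]
      exact fun x hx j _ => le_normalizer_map_pCore _ (hx j trivial)
  refine isRadicalPSubgroup_iff_map_pCore_le.2 ⟨?_, ?_⟩
  · rw [← comap_mulSingle_pi K i]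
    exact hK.1.comap_of_injective _ (Pi.mulSingle_injective i)
  · simpa only [comap_mulSingle_pi] using comap_mono (f := MonoidHom.mulSingle H i) hO

end RadicalPi

/-- Olsson–Uno: a radical `p`-subgroup `P` of a direct product
`H = H_1 × ⋯ × H_t` of finite groups decomposes as `P = P_1 × ⋯ × P_t` with
`P_i = P ∩ H_i`, and each `P_i` is a radical `p`-subgroup of `H_i`. -/
theorem stmt_19 (p : ℕ) (hp : p.Prime) (t : ℕ)
    (H : Fin t → Type*) [∀ i, Group (H i)] [∀ i, Finite (H i)]
    (P : Subgroup (∀ i, H i)) (hrad : IsRadicalPSubgroup p P) :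
    P = Subgroup.pi Set.univ (fun i => Subgroup.comap (MonoidHom.mulSingle H i) P) ∧
    ∀ i, IsRadicalPSubgroup p (Subgroup.comap (MonoidHom.mulSingle H i) P) := by
  have : Fact p.Prime := ⟨hp⟩
  have hpi := hrad.eq_pi_comap_mulSingle
  exact ⟨hpi, (hpi ▸ hrad).of_pi⟩
end
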